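/- Let 0 ≤ η < 1/2 and let M be any probability distribution on {0,1}^{n+2} with d_TV(M, M_s^η) ≤ ε for some s ∈ {0,1}^n and ε ≥ 0. Call x ∈ {0,1}^n 'bad' if M(x, ¬χ_s(x), |x|+¬χ_s(x) mod 2) ≥ M(x, χ_s(x), |x|+χ_s(x) mod 2). Then the number of bad x is at most 2ε·2^n/(1−2η). Consequently, for uniformly random x, comparing the evaluator values M(x,0,|x|) and M(x,1,|x|+1) recovers χ_s(x) except with probability at most 2ε/(1−2η). -/
import Mathlib


/-- The parity function `χ_s(x) = x · s mod 2`. -/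
def chi {n : ℕ} (s x : Fin n → ZMod 2) : ZMod 2 := ∑ i, s i * x i

/-- The parity `|x|` of a bitstring: the sum of its bits mod 2. -/
def par {n : ℕ} (x : Fin n → ZMod 2) : ZMod 2 := ∑ i, x i

/-- The fermionized noisy parity distribution `M_s^η` on `{0,1}^{n+2}`:
`(1-η)·2^{-n}` if `χ_s(x) = y` and `|x|+y = z`; `η·2^{-n}` if `χ_s(x) ≠ y` and `|x|+y = z`;
and `0` otherwise. -/
noncomputable def Mnoisy {n : ℕ} (η : ℝ) (s : Fin n → ZMod 2) (x : Fin n → ZMod 2) (y z : ZMod 2) : ℝ :=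
  if chi s x = y ∧ par x + y = z then (1 - η) * ((2 : ℝ) ^ n)⁻¹
  else if chi s x ≠ y ∧ par x + y = z then η * ((2 : ℝ) ^ n)⁻¹
  else 0

lemma zmod2_cases (a : ZMod 2) : a = 0 ∨ a = 1 := by revert a; decide

lemma sum_zmod2 (f : ZMod 2 → ℝ) (a : ZMod 2) : ∑ y : ZMod 2, f y = f a + f (a + 1) := by
  rcases zmod2_cases a with h | h <;> subst h
  · exact Fin.sum_univ_two f
  · calc ∑ y : ZMod 2, f y = f 0 + f 1 := Fin.sum_univ_two f
      _ = f 1 + f (1 + 1) := by rw [show f (1 + 1) = f 0 from rfl]; ring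

lemma zmod2_ne_add_one (a : ZMod 2) : a ≠ a + 1 := by
  intro h; exact one_ne_zero (left_eq_add.mp h)

/-- Recovering the parity function from an approximate evaluator in the noisy case: let
`0 ≤ η < 1/2` and let `M` be a probability distribution on `{0,1}^{n+2}` with
`d_TV(M, M_s^η) ≤ ε`. Call `x` *bad* when
`M(x, ¬χ_s(x), |x| + ¬χ_s(x)) ≥ M(x, χ_s(x), |x| + χ_s(x))`. Then there are at most
`2ε·2^n/(1-2η)` bad strings `x`. Hence comparing `M(x,0,|x|)` and `M(x,1,|x|+1)`
recovers `χ_s(x)` for a uniformly random `x` except with probability at most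
`2ε/(1-2η)`. (In `ZMod 2`, `¬b = b + 1`.) -/
theorem bad_count_Mnoisy (n : ℕ) (s : Fin n → ZMod 2) (η : ℝ) (hη0 : 0 ≤ η)
    (hη : η < 1 / 2) (ε : ℝ) (hε : 0 ≤ ε)
    (M : (Fin n → ZMod 2) → ZMod 2 → ZMod 2 → ℝ)
    (hM0 : ∀ x y z, 0 ≤ M x y z)
    (hM1 : (∑ x : Fin n → ZMod 2, ∑ y : ZMod 2, ∑ z : ZMod 2, M x y z) = 1)
    (hTV : (1 / 2 : ℝ) * (∑ x : Fin n → ZMod 2, ∑ y : ZMod 2, ∑ z : ZMod 2,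
      |M x y z - Mnoisy η s x y z|) ≤ ε) :
    ((Finset.univ.filter (fun x : Fin n → ZMod 2 =>
        M x (chi s x) (par x + chi s x) ≤
          M x (chi s x + 1) (par x + (chi s x + 1)))).card : ℝ)
      ≤ 2 * ε * 2 ^ n / (1 - 2 * η) := by
  set bad := Finset.univ.filter (fun x : Fin n → ZMod 2 =>
        M x (chi s x) (par x + chi s x) ≤
          M x (chi s x + 1) (par x + (chi s x + 1))) with hbad
  have hp : (0:ℝ) < (2:ℝ) ^ n := by positivity
  set c : ℝ := (1 - 2 * η) * ((2:ℝ) ^ n)⁻¹ with hc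
  have hcpos : 0 < c := by
    apply mul_pos (by linarith) (by positivity)
  -- inner sums are nonneg
  have hinner_nonneg : ∀ x : Fin n → ZMod 2,
      0 ≤ ∑ y : ZMod 2, ∑ z : ZMod 2, |M x y z - Mnoisy η s x y z| := by
    intro x
    apply Finset.sum_nonneg; intro y _
    apply Finset.sum_nonneg; intro z _
    exact abs_nonneg _
  -- key bound for bad x
  have hkey : ∀ x ∈ bad,
      c ≤ ∑ y : ZMod 2, ∑ z : ZMod 2, |M x y z - Mnoisy η s x y z| := by
    intro x hx
    rw [hbad, Finset.mem_filter] at hx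
    have hb := hx.2
    set a := chi s x with ha
    set p := par x with hp'
    have hne : a ≠ a + 1 := zmod2_ne_add_one a
    have e1 : Mnoisy η s x a (p + a) = (1 - η) * ((2:ℝ) ^ n)⁻¹ := by
      simp [Mnoisy, ← ha, ← hp']
    have e2 : Mnoisy η s x (a + 1) (p + (a + 1)) = η * ((2:ℝ) ^ n)⁻¹ := by
      simp [Mnoisy, ← ha, ← hp', hne]
    rw [sum_zmod2 (fun y => ∑ z : ZMod 2, |M x y z - Mnoisy η s x y z|) a]
    rw [sum_zmod2 (fun z => |M x a z - Mnoisy η s x a z|) (p + a)]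
    rw [sum_zmod2 (fun z => |M x (a+1) z - Mnoisy η s x (a+1) z|) (p + (a + 1))]
    simp only [e1, e2]
    have h1 : -(M x a (p + a) - Mnoisy η s x a (p + a)) ≤
        |M x a (p + a) - Mnoisy η s x a (p + a)| := neg_le_abs _
    have h2 : M x (a+1) (p + (a+1)) - Mnoisy η s x (a+1) (p + (a+1)) ≤
        |M x (a+1) (p + (a+1)) - Mnoisy η s x (a+1) (p + (a+1))| := le_abs_self _
    have h3 : 0 ≤ |M x a (p + a + 1) - Mnoisy η s x a (p + a + 1)| := abs_nonneg _
    have h4 : 0 ≤ |M x (a+1) (p + (a+1) + 1) - Mnoisy η s x (a+1) (p + (a+1) + 1)| :=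
      abs_nonneg _
    rw [e1] at h1
    rw [e2] at h2
    have hη2 : (1 - η) * ((2:ℝ) ^ n)⁻¹ - η * ((2:ℝ) ^ n)⁻¹ = c := by
      rw [hc]; ring
    linarith [h1, h2, h3, h4, hb, hη2]
  -- sum over bad ≤ total sum ≤ 2ε
  have hsum1 : (bad.card : ℝ) * c ≤
      ∑ x ∈ bad, ∑ y : ZMod 2, ∑ z : ZMod 2, |M x y z - Mnoisy η s x y z| := by
    calc (bad.card : ℝ) * c = ∑ _x ∈ bad, c := by rw [Finset.sum_const]; ring
    _ ≤ _ := Finset.sum_le_sum hkey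
  have hsum2 : ∑ x ∈ bad, ∑ y : ZMod 2, ∑ z : ZMod 2, |M x y z - Mnoisy η s x y z| ≤
      ∑ x : Fin n → ZMod 2, ∑ y : ZMod 2, ∑ z : ZMod 2, |M x y z - Mnoisy η s x y z| := by
    apply Finset.sum_le_sum_of_subset_of_nonneg (Finset.filter_subset _ _)
    intro x _ _; exact hinner_nonneg x
  have htot : (bad.card : ℝ) * c ≤ 2 * ε := by linarith
  rw [le_div_iff₀ (by linarith : (0:ℝ) < 1 - 2 * η)]
  have : (bad.card : ℝ) * ((1 - 2*η) * ((2:ℝ)^n)⁻¹) * (2:ℝ)^n ≤ 2 * ε * (2:ℝ)^n := by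
    exact mul_le_mul_of_nonneg_right (by rw [← hc]; exact htot) (le_of_lt hp)
  calc (bad.card : ℝ) * (1 - 2 * η)
      = (bad.card : ℝ) * ((1 - 2*η) * ((2:ℝ)^n)⁻¹) * (2:ℝ)^n := by
        field_simp
    _ ≤ 2 * ε * (2:ℝ)^n := this
    _ = 2 * ε * 2 ^ n := by norm_num
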